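/- The Price of Anarchy of the two-user selfish routing game on the load-balancing network, i.e., the ratio of the total cost J₁ + J₂ at the Nash equilibrium (r/2 + ζ, r/2 + ζ) to the minimum of J₁ + J₂ over [0,r]², equals 1 + ((r/2 − ζ)c)/(rL), where ζ = cδ/(2L). -/

import Mathlib

/-- Elbow latency function with parameters `r, L, δ`. -/
noncomputable def T (r L δ x : ℝ) : ℝ := max 0 (L / δ * (x - r) + L)

/-- Cost of user 1 in the two-user load-balancing game. -/
noncomputable def J₁ (r L δ c x₁ x₂ : ℝ) : ℝ :=
  x₁ * T r L δ (x₁ + (r - x₂)) + (r - x₁) * (c + T r L δ (x₂ + (r - x₁)))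

/-- Cost of user 2 in the two-user load-balancing game. -/
noncomputable def J₂ (r L δ c x₁ x₂ : ℝ) : ℝ :=
  x₂ * T r L δ (x₂ + (r - x₁)) + (r - x₂) * (c + T r L δ (x₁ + (r - x₂)))

/-! The total cost splits as `f₁ T(f₁) + f₂ T(f₂) + c (2r - x₁ - x₂)` with `f₁ + f₂ = 2r`.
The map `x ↦ x T(x)` is convex and lies above its tangent line at `x = r`, so the two link terms
sum to at least `2 r T(r) = 2 r L`, while the cross-link term is nonnegative; both bounds are
attained at `x₁ = x₂ = r`. Hence the optimum is `2 r L`, and at the symmetric equilibrium only the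
cross-link term `c (r - 2ζ)` is added. -/

theorem T_self {r L : ℝ} (δ : ℝ) (hL : 0 ≤ L) : T r L δ r = L := by
  rw [T, sub_self, mul_zero, zero_add, max_eq_right hL]

theorem tangent_le_mul_T {r L δ : ℝ} (hδ : 0 < δ) (hL : 0 ≤ L) (hr : 0 ≤ r) (x : ℝ) :
    r * L + L / δ * (r + δ) * (x - r) ≤ x * T r L δ x := by
  set s := L / δ
  have hslope : 0 ≤ s := div_nonneg hL hδ.le
  have hL_eq : L = s * δ := (div_mul_cancel₀ L hδ.ne').symm
  rw [T]
  rcases le_total (s * (x - r) + L) 0 with hflat | hsteep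
  · have hgap : r * L + s * (r + δ) * (x - r) = (r + δ) * (s * (x - r) + L) - L * δ := by
      rw [hL_eq]; ring
    rw [max_eq_left hflat, mul_zero, hgap]
    linarith [mul_nonpos_of_nonneg_of_nonpos (by linarith : 0 ≤ r + δ) hflat, mul_nonneg hL hδ.le]
  · have hgap : x * (s * (x - r) + L) - (r * L + s * (r + δ) * (x - r)) = s * (x - r) ^ 2 := by
      rw [hL_eq]; ring
    rw [max_eq_right hsteep]
    linarith [mul_nonneg hslope (sq_nonneg (x - r))]

theorem J₁_add_J₂ (r L δ c x₁ x₂ : ℝ) :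
    J₁ r L δ c x₁ x₂ + J₂ r L δ c x₁ x₂ =
      (x₁ + (r - x₂)) * T r L δ (x₁ + (r - x₂)) + (x₂ + (r - x₁)) * T r L δ (x₂ + (r - x₁)) +
        c * (2 * r - x₁ - x₂) := by
  rw [J₁, J₂]; ring

theorem J₁_add_J₂_diag {r L : ℝ} (δ c x : ℝ) (hL : 0 ≤ L) :
    J₁ r L δ c x x + J₂ r L δ c x x = 2 * r * L + 2 * c * (r - x) := by
  rw [J₁_add_J₂, add_sub_cancel, T_self δ hL]; ring

theorem two_mul_mul_le_J₁_add_J₂ {r L δ c x₁ x₂ : ℝ} (hδ : 0 < δ) (hL : 0 ≤ L) (hc : 0 ≤ c)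
    (hr : 0 ≤ r) (hx₁ : x₁ ≤ r) (hx₂ : x₂ ≤ r) :
    2 * r * L ≤ J₁ r L δ c x₁ x₂ + J₂ r L δ c x₁ x₂ := by
  have h₁ := tangent_le_mul_T hδ hL hr (x₁ + (r - x₂))
  have h₂ := tangent_le_mul_T hδ hL hr (x₂ + (r - x₁))
  have hcross : 0 ≤ c * (2 * r - x₁ - x₂) := mul_nonneg hc (by linarith)
  rw [J₁_add_J₂]
  linarith

theorem isLeast_J₁_add_J₂ {r L δ c : ℝ} (hδ : 0 < δ) (hL : 0 ≤ L) (hc : 0 ≤ c) (hr : 0 ≤ r) :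
    IsLeast ((fun p : ℝ × ℝ => J₁ r L δ c p.1 p.2 + J₂ r L δ c p.1 p.2) ''
      (Set.Icc (0 : ℝ) r ×ˢ Set.Icc (0 : ℝ) r)) (2 * r * L) := by
  refine ⟨⟨(r, r), ⟨⟨hr, le_rfl⟩, ⟨hr, le_rfl⟩⟩, ?_⟩, ?_⟩
  · simp only [J₁_add_J₂_diag δ c r hL]; ring
  · rintro _ ⟨⟨x₁, x₂⟩, ⟨⟨-, hx₁⟩, ⟨-, hx₂⟩⟩, rfl⟩
    exact two_mul_mul_le_J₁_add_J₂ hδ hL hc hr hx₁ hx₂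

theorem price_of_anarchy_formula
    (r L δ c : ℝ) (hδ : 0 < δ) (hδL : δ < L) (hLc : L < c) (hcδ : c * δ < r * L)
    (ζ : ℝ) (hζ : ζ = c * δ / (2 * L)) :
    (J₁ r L δ c (r / 2 + ζ) (r / 2 + ζ) + J₂ r L δ c (r / 2 + ζ) (r / 2 + ζ)) /
      sInf ((fun p : ℝ × ℝ => J₁ r L δ c p.1 p.2 + J₂ r L δ c p.1 p.2) ''
        (Set.Icc (0 : ℝ) r ×ˢ Set.Icc (0 : ℝ) r)) =
    1 + (r / 2 - ζ) * c / (r * L) := by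
  have hL : 0 < L := hδ.trans hδL
  have hc : 0 < c := hL.trans hLc
  have hr : 0 < r := by nlinarith [mul_pos hc hδ]
  rw [J₁_add_J₂_diag δ c _ hL.le, (isLeast_J₁_add_J₂ hδ hL.le hc.le hr.le).csInf_eq, hζ]
  field_simp
  ring
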